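/- arXiv:2203.09687 — 6 statements merged into one kernel-verified Lean document; each statement's English description precedes it below -/
import Mathlib

section
/- If (X_1, X_2, ...) is a stationary sequence of integrable real-valued random variables with E[X_1] > 0, and S_n := X_1 + ... + X_n, then P(S_n > 0 for all n ≥ 1) > 0. -/
open MeasureTheory Finset Filter

/-- `G n f = min (S 1, ..., S (n+1))` where `S k = f 0 + ... + f (k-1)`, defined
recursively. -/
def minPartialSum : ℕ → (ℕ → ℝ) → ℝ
  | 0 => fun f => f 0
  | (n+1) => fun f => min (f 0) (f 0 + minPartialSum n (fun i => f (i+1)))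

lemma minPartialSum_measurable (n : ℕ) : Measurable (minPartialSum n) := by
  induction n with
  | zero => exact measurable_pi_apply 0
  | succ n ih =>
    have h1 : Measurable fun f : ℕ → ℝ => fun i => f (i+1) :=
      measurable_pi_lambda _ (fun i => measurable_pi_apply _)
    exact (measurable_pi_apply 0).min ((measurable_pi_apply 0).add (ih.comp h1))

lemma min_add_add_left' (a b c : ℝ) : min (a+b) (a+c) = a + min b c := by
  rcases le_total b c with h | h <;> simp [h]

lemma sub_min' (a b c : ℝ) : a - min b c = max (a-b) (a-c) := by
  rcases le_total b c with h | h
  · rw [min_eq_left h, max_eq_left (sub_le_sub_left h a)]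
  · rw [min_eq_right h, max_eq_right (sub_le_sub_left h a)]

lemma minPartialSum_succ (n : ℕ) (f : ℕ → ℝ) :
    minPartialSum (n+1) f = f 0 + min 0 (minPartialSum n (fun i => f (i+1))) := by
  rw [minPartialSum, ← min_add_add_left', add_zero]

lemma minPartialSum_succ_le (n : ℕ) (f : ℕ → ℝ) :
    minPartialSum (n+1) f ≤ minPartialSum n f := by
  induction n generalizing f with
  | zero => simp [minPartialSum]
  | succ n ih =>
    show min (f 0) (f 0 + minPartialSum (n+1) (fun i => f (i+1)))
        ≤ min (f 0) (f 0 + minPartialSum n (fun i => f (i+1)))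
    exact min_le_min le_rfl (add_le_add le_rfl (ih _))

lemma minPartialSum_anti (f : ℕ → ℝ) : Antitone (fun n => minPartialSum n f) :=
  antitone_nat_of_succ_le (fun n => minPartialSum_succ_le n f)

lemma minPartialSum_le_sum (n : ℕ) (f : ℕ → ℝ) :
    minPartialSum n f ≤ ∑ i ∈ Finset.range (n+1), f i := by
  induction n generalizing f with
  | zero => simp [minPartialSum]
  | succ n ih =>
    calc minPartialSum (n+1) f ≤ f 0 + minPartialSum n (fun i => f (i+1)) :=
          min_le_right _ _
      _ ≤ f 0 + ∑ i ∈ Finset.range (n+1), f (i+1) := add_le_add le_rfl (ih _)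
      _ = ∑ i ∈ Finset.range (n+2), f i := by
          rw [Finset.sum_range_succ' f (n+1)]; ring

lemma minPartialSum_integrable {Ω : Type*} [MeasurableSpace Ω] (μ : Measure Ω) (n : ℕ) :
    ∀ (X : ℕ → Ω → ℝ), (∀ i, Integrable (X i) μ) →
      Integrable (fun ω => minPartialSum n (fun i => X i ω)) μ := by
  induction n with
  | zero => intro X hX; simpa [minPartialSum] using hX 0
  | succ n ih =>
    intro X hX
    have h1 := ih (fun i => X (i+1)) (fun i => hX (i+1))
    exact (hX 0).inf ((hX 0).add h1)

/-- If `(X 0, X 1, ...)` (representing `X_1, X_2, ...`) is a stationary sequence of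
integrable random variables with `E[X 0] > 0`, then with positive probability all the
partial sums `S_n = X 0 + ... + X (n-1)` (`n ≥ 1`) are positive. -/
theorem positive_prob_never_broke
    {Ω : Type*} [MeasurableSpace Ω] (μ : Measure Ω) [IsProbabilityMeasure μ]
    (X : ℕ → Ω → ℝ) (hmeas : ∀ n, Measurable (X n))
    (hint : ∀ n, Integrable (X n) μ)
    (hstat : ∀ k : ℕ,
      Measure.map (fun ω => fun i => X (i + k) ω) μ =
      Measure.map (fun ω => fun i => X i ω) μ)
    (hmean : 0 < ∫ ω, X 0 ω ∂μ) :
    0 < μ {ω | ∀ n : ℕ, 0 < ∑ i ∈ Finset.range (n + 1), X i ω} := by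
  by_contra h
  push_neg at h
  have hA : μ {ω | ∀ n : ℕ, 0 < ∑ i ∈ Finset.range (n + 1), X i ω} = 0 :=
    le_antisymm h (by simp)
  -- almost every ω has some nonpositive partial sum
  have hae : ∀ᵐ ω ∂μ, ∃ k : ℕ, ∑ i ∈ Finset.range (k+1), X i ω ≤ 0 := by
    rw [ae_iff]
    simpa only [not_exists, not_le] using hA
  set m : ℕ → Ω → ℝ := fun n ω => minPartialSum n (fun i => X i ω) with hm
  have hm_int : ∀ n, Integrable (m n) μ :=
    fun n => minPartialSum_integrable μ n X hint
  have hm'_int : ∀ n, Integrable (fun ω => minPartialSum n (fun i => X (i+1) ω)) μ :=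
    fun n => minPartialSum_integrable μ n (fun i => X (i+1)) (fun i => hint (i+1))
  -- stationarity transfer
  have hφ : Measurable fun ω => fun i => X i ω := measurable_pi_lambda _ hmeas
  have hψ : Measurable fun ω => fun i => X (i+1) ω :=
    measurable_pi_lambda _ (fun i => hmeas (i+1))
  have key : ∀ n, ∫ ω, min 0 (minPartialSum n (fun i => X (i+1) ω)) ∂μ
      = ∫ ω, min 0 (m n ω) ∂μ := by
    intro n
    have hF : Measurable (fun f : ℕ → ℝ => min 0 (minPartialSum n f)) :=
      measurable_const.min (minPartialSum_measurable n)
    calc ∫ ω, min 0 (minPartialSum n (fun i => X (i+1) ω)) ∂μ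
        = ∫ f, min 0 (minPartialSum n f) ∂(Measure.map (fun ω => fun i => X (i+1) ω) μ) :=
          (integral_map hψ.aemeasurable hF.aestronglyMeasurable).symm
      _ = ∫ f, min 0 (minPartialSum n f) ∂(Measure.map (fun ω => fun i => X i ω) μ) := by
          rw [hstat 1]
      _ = ∫ ω, min 0 (m n ω) ∂μ :=
          integral_map hφ.aemeasurable hF.aestronglyMeasurable
  -- the pointwise identity and the main inequality
  have hle : ∀ n, ∫ ω, X 0 ω ∂μ ≤ ∫ ω, max (m (n+1) ω) 0 ∂μ := by
    intro n
    have hpt : ∀ ω, X 0 ω = m (n+1) ω - min 0 (minPartialSum n (fun i => X (i+1) ω)) := by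
      intro ω
      have := minPartialSum_succ n (fun i => X i ω)
      simp only [hm]
      rw [this]; ring
    have hmin_int : ∀ k, Integrable (fun ω => min 0 (m k ω)) μ :=
      fun k => (integrable_const 0).inf (hm_int k)
    have hmin'_int : Integrable (fun ω => min 0 (minPartialSum n (fun i => X (i+1) ω))) μ :=
      (integrable_const 0).inf (hm'_int n)
    calc ∫ ω, X 0 ω ∂μ
        = ∫ ω, (m (n+1) ω - min 0 (minPartialSum n (fun i => X (i+1) ω))) ∂μ := by
          exact integral_congr_ae (Filter.Eventually.of_forall hpt)
      _ = ∫ ω, m (n+1) ω ∂μ - ∫ ω, min 0 (minPartialSum n (fun i => X (i+1) ω)) ∂μ :=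
          integral_sub (hm_int (n+1)) hmin'_int
      _ = ∫ ω, m (n+1) ω ∂μ - ∫ ω, min 0 (m n ω) ∂μ := by rw [key n]
      _ ≤ ∫ ω, m (n+1) ω ∂μ - ∫ ω, min 0 (m (n+1) ω) ∂μ := by
          have : ∫ ω, min 0 (m (n+1) ω) ∂μ ≤ ∫ ω, min 0 (m n ω) ∂μ := by
            apply integral_mono (hmin_int (n+1)) (hmin_int n)
            intro ω
            exact min_le_min le_rfl (minPartialSum_succ_le n _)
          linarith
      _ = ∫ ω, (m (n+1) ω - min 0 (m (n+1) ω)) ∂μ :=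
          (integral_sub (hm_int (n+1)) (hmin_int (n+1))).symm
      _ = ∫ ω, max (m (n+1) ω) 0 ∂μ := by
          apply integral_congr_ae (Filter.Eventually.of_forall _)
          intro ω
          rw [sub_min', sub_zero, sub_self]
  -- dominated convergence: the right-hand side tends to 0
  have htend : Tendsto (fun n => ∫ ω, max (m (n+1) ω) 0 ∂μ) atTop (nhds 0) := by
    have htend' : Tendsto (fun n => ∫ ω, max (m (n+1) ω) 0 ∂μ) atTop
        (nhds (∫ (_ : Ω), (0:ℝ) ∂μ)) := by
      apply tendsto_integral_of_dominated_convergence (fun ω => |X 0 ω|)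
      · intro n
        exact ((hm_int (n+1)).aestronglyMeasurable.sup aestronglyMeasurable_const)
      · exact (hint 0).abs
      · intro n
        filter_upwards with ω
        have h1 : m (n+1) ω ≤ m 0 ω := minPartialSum_anti (fun i => X i ω) (Nat.zero_le (n+1))
        have h2 : m 0 ω = X 0 ω := rfl
        rw [Real.norm_eq_abs, abs_of_nonneg (le_max_right _ _)]
        calc max (m (n+1) ω) 0 ≤ max (X 0 ω) 0 := max_le_max (h2 ▸ h1) le_rfl
          _ ≤ |X 0 ω| := max_le (le_abs_self _) (abs_nonneg _)
      · filter_upwards [hae] with ω hk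
        obtain ⟨k, hk⟩ := hk
        apply Tendsto.congr' (f₁ := fun _ => (0:ℝ)) _ tendsto_const_nhds
        rw [Filter.EventuallyEq, eventually_atTop]
        refine ⟨k, fun n hn => ?_⟩
        have h1 : m (n+1) ω ≤ m k ω :=
          minPartialSum_anti (fun i => X i ω) (hn.trans (Nat.le_succ n))
        have h2 : m k ω ≤ ∑ i ∈ Finset.range (k+1), X i ω :=
          minPartialSum_le_sum k (fun i => X i ω)
        have : m (n+1) ω ≤ 0 := le_trans h1 (le_trans h2 hk)
        exact (max_eq_right this).symm
    simpa using htend'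
  have hfin : ∫ ω, X 0 ω ∂μ ≤ 0 := ge_of_tendsto' htend (fun n => hle n)
  linarith
end

section
/- If (X_1, X_2, ...) is a stationary sequence of integrable real-valued random variables and S_n := X_1 + ... + X_n, then E[X_1 · 1_{A}] ≤ 0, where A is the event that S_n ≤ 0 for some n ≥ 1. (Maximal ergodic theorem.) -/
open MeasureTheory Finset

/-- Running minimum `min (0, S 1, ..., S n)` of partial sums of a sequence. -/
noncomputable def mergG : ℕ → (ℕ → ℝ) → ℝ
  | 0 => fun _ => 0
  | n + 1 => fun f => min (mergG n f) (∑ i ∈ Finset.range (n + 1), f i)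

lemma mergG_nonpos (n : ℕ) (f : ℕ → ℝ) : mergG n f ≤ 0 := by
  induction n with
  | zero => exact le_refl 0
  | succ n ih => exact min_le_of_left_le ih

lemma mergG_succ_le (n : ℕ) (f : ℕ → ℝ) : mergG (n + 1) f ≤ mergG n f :=
  min_le_left _ _

lemma mergG_le_sum (f : ℕ → ℝ) : ∀ n k, k ≤ n → mergG n f ≤ ∑ i ∈ Finset.range k, f i := by
  intro n
  induction n with
  | zero => intro k hk; simp [Nat.le_zero.mp hk, mergG]
  | succ n ih =>
    intro k hk
    rcases Nat.lt_or_ge k (n + 1) with h | h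
    · exact le_trans (mergG_succ_le n f) (ih k (Nat.lt_succ_iff.mp h))
    · have : k = n + 1 := le_antisymm hk h
      subst this
      exact min_le_right _ _

lemma mergG_attained (f : ℕ → ℝ) : ∀ n, ∃ k ≤ n, mergG n f = ∑ i ∈ Finset.range k, f i := by
  intro n
  induction n with
  | zero => exact ⟨0, le_refl 0, by simp [mergG]⟩
  | succ n ih =>
    rcases ih with ⟨k, hk, hke⟩
    rcases le_total (mergG n f) (∑ i ∈ Finset.range (n + 1), f i) with h | h
    · refine ⟨k, Nat.le_succ_of_le hk, ?_⟩
      show min (mergG n f) _ = _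
      rw [min_eq_left h]; exact hke
    · refine ⟨n + 1, le_refl _, ?_⟩
      show min (mergG n f) _ = _
      rw [min_eq_right h]

lemma mergG_nonneg (f : ℕ → ℝ) : ∀ n, (∀ k ≤ n, 0 ≤ ∑ i ∈ Finset.range k, f i) →
    0 ≤ mergG n f := by
  intro n
  induction n with
  | zero => intro _; exact le_refl 0
  | succ n ih =>
    intro h
    exact le_min (ih fun k hk => h k (Nat.le_succ_of_le hk)) (h (n + 1) (le_refl _))

lemma mergG_measurable (n : ℕ) : Measurable (mergG n) := by
  induction n with
  | zero => exact measurable_const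
  | succ n ih =>
    exact ih.min (Finset.measurable_sum _ fun i _ => measurable_pi_apply i)

/-- Maximal ergodic theorem: if `(X 0, X 1, ...)` is a stationary sequence of integrable
random variables and `S n = X 0 + ... + X (n-1)`, then `E[X 0 ; ∃ n ≥ 1, S n ≤ 0] ≤ 0`. -/
theorem maximal_ergodic
    {Ω : Type*} [MeasurableSpace Ω] (μ : Measure Ω) [IsProbabilityMeasure μ]
    (X : ℕ → Ω → ℝ) (hmeas : ∀ n, Measurable (X n))
    (hint : ∀ n, Integrable (X n) μ)
    (hstat : ∀ k : ℕ,
      Measure.map (fun ω => fun i => X (i + k) ω) μ =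
      Measure.map (fun ω => fun i => X i ω) μ) :
    ∫ ω in {ω | ∃ n : ℕ, ∑ i ∈ Finset.range (n + 1), X i ω ≤ 0}, X 0 ω ∂μ ≤ 0 := by
  -- the approximating events
  set B : ℕ → Set Ω := fun n => {ω | ∃ k ≤ n, ∑ i ∈ Finset.range (k + 1), X i ω ≤ 0} with hB
  have hSmeas : ∀ k : ℕ, Measurable fun ω => ∑ i ∈ Finset.range k, X i ω :=
    fun k => Finset.measurable_sum _ fun i _ => hmeas i
  have hBmeas : ∀ n, MeasurableSet (B n) := by
    intro n
    have : B n = ⋃ k ∈ Finset.range (n + 1), {ω | ∑ i ∈ Finset.range (k + 1), X i ω ≤ 0} := by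
      ext ω
      simp [hB, Nat.lt_succ_iff]
    rw [this]
    exact Finset.measurableSet_biUnion _ fun k _ =>
      measurableSet_le (hSmeas (k + 1)) measurable_const
  have hBmono : Monotone B := by
    intro a b hab ω ⟨k, hk, hke⟩
    exact ⟨k, le_trans hk hab, hke⟩
  -- φ n = mergG of the original sums, ψ n = mergG of the shifted sums
  set φ : ℕ → Ω → ℝ := fun n ω => mergG n (fun i => X i ω) with hφ
  set ψ : ℕ → Ω → ℝ := fun n ω => mergG n (fun i => X (i + 1) ω) with hψ
  have hφmeas : ∀ n, Measurable (φ n) :=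
    fun n => (mergG_measurable n).comp (measurable_pi_lambda _ fun i => hmeas i)
  have hψmeas : ∀ n, Measurable (ψ n) :=
    fun n => (mergG_measurable n).comp (measurable_pi_lambda _ fun i => hmeas (i + 1))
  have hφint : ∀ n, Integrable (φ n) μ := by
    intro n
    induction n with
    | zero => simpa [hφ, mergG] using integrable_const (0 : ℝ)
    | succ n ih =>
      have : φ (n + 1) = fun ω => min (φ n ω) (∑ i ∈ Finset.range (n + 1), X i ω) := rfl
      rw [this]
      exact ih.inf (integrable_finset_sum _ fun i _ => hint i)
  have hψint : ∀ n, Integrable (ψ n) μ := by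
    intro n
    induction n with
    | zero => simpa [hψ, mergG] using integrable_const (0 : ℝ)
    | succ n ih =>
      have : ψ (n + 1) = fun ω => min (ψ n ω) (∑ i ∈ Finset.range (n + 1), X (i + 1) ω) := rfl
      rw [this]
      exact ih.inf (integrable_finset_sum _ fun i _ => hint (i + 1))
  -- stationarity: ∫ ψ n = ∫ φ n
  have hmap : ∀ k : ℕ, Measurable fun ω => fun i => X (i + k) ω :=
    fun k => measurable_pi_lambda _ fun i => hmeas (i + k)
  have hstatInt : ∀ n, ∫ ω, ψ n ω ∂μ = ∫ ω, φ n ω ∂μ := by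
    intro n
    have h1 := integral_map (μ := μ) (φ := fun ω => fun i => X (i + 1) ω) (f := mergG n)
      (hmap 1).aemeasurable (mergG_measurable n).aestronglyMeasurable
    have h2 := integral_map (μ := μ) (φ := fun ω => fun i => X i ω) (f := mergG n)
      (measurable_pi_lambda _ fun i => hmeas i).aemeasurable
      (mergG_measurable n).aestronglyMeasurable
    calc ∫ ω, ψ n ω ∂μ
        = ∫ f, mergG n f ∂(Measure.map (fun ω => fun i => X (i + 1) ω) μ) := h1.symm
      _ = ∫ f, mergG n f ∂(Measure.map (fun ω => fun i => X i ω) μ) := by rw [hstat 1]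
      _ = ∫ ω, φ n ω ∂μ := h2
  -- the key pointwise estimates
  have key1 : ∀ n, ∀ ω ∈ B n, X 0 ω ≤ φ (n + 1) ω - ψ n ω := by
    intro n ω hω
    obtain ⟨k₀, hk₀, hS₀⟩ := hω
    -- the minimum is attained at some j ≥ 1
    obtain ⟨j, hj, hje⟩ := mergG_attained (fun i => X i ω) (n + 1)
    have hjpos : ∃ j₁ ≤ n, φ (n + 1) ω = ∑ i ∈ Finset.range (j₁ + 1), X i ω := by
      rcases Nat.eq_zero_or_pos j with rfl | hpos
      · -- min = 0; then S(k₀+1) = 0 as well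
        have h0 : φ (n + 1) ω = 0 := by simpa using hje
        have hle : φ (n + 1) ω ≤ ∑ i ∈ Finset.range (k₀ + 1), X i ω :=
          mergG_le_sum _ (n + 1) (k₀ + 1) (Nat.succ_le_succ hk₀)
        refine ⟨k₀, hk₀, le_antisymm hle ?_⟩
        rw [h0]; exact hS₀
      · obtain ⟨j₁, rfl⟩ := Nat.exists_eq_succ_of_ne_zero hpos.ne'
        exact ⟨j₁, Nat.lt_succ_iff.mp hj, hje⟩
    obtain ⟨j₁, hj₁, hje'⟩ := hjpos
    have hsplit : ∑ i ∈ Finset.range (j₁ + 1), X i ω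
        = (∑ i ∈ Finset.range j₁, X (i + 1) ω) + X 0 ω := Finset.sum_range_succ' _ _
    have hψle : ψ n ω ≤ ∑ i ∈ Finset.range j₁, X (i + 1) ω :=
      mergG_le_sum _ n j₁ hj₁
    have : X 0 ω = φ (n + 1) ω - ∑ i ∈ Finset.range j₁, X (i + 1) ω := by
      rw [hje', hsplit]; ring
    rw [this]
    linarith
  have key2 : ∀ n, ∀ ω, ω ∉ B n → 0 ≤ φ (n + 1) ω - ψ n ω := by
    intro n ω hω
    have hψ0 : ψ n ω ≤ 0 := mergG_nonpos _ _
    have hφ0 : 0 ≤ φ (n + 1) ω := by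
      apply mergG_nonneg
      intro k hk
      rcases Nat.eq_zero_or_pos k with rfl | hpos
      · simp
      · obtain ⟨k₁, rfl⟩ := Nat.exists_eq_succ_of_ne_zero hpos.ne'
        by_contra h
        exact hω ⟨k₁, Nat.lt_succ_iff.mp hk, le_of_not_ge h⟩
    linarith
  -- per-n integral bound
  have hbound : ∀ n, ∫ ω in B n, X 0 ω ∂μ ≤ 0 := by
    intro n
    set g : Ω → ℝ := fun ω => φ (n + 1) ω - ψ n ω with hg
    have hgint : Integrable g μ := (hφint (n + 1)).sub (hψint n)
    have h1 : ∫ ω in B n, X 0 ω ∂μ ≤ ∫ ω in B n, g ω ∂μ := by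
      apply setIntegral_mono_on (hint 0).integrableOn hgint.integrableOn (hBmeas n)
      intro ω hω
      exact key1 n ω hω
    have h2 : ∫ ω in B n, g ω ∂μ ≤ ∫ ω, g ω ∂μ := by
      have hsplit := integral_add_compl (hBmeas n) hgint
      have hpos : 0 ≤ ∫ ω in (B n)ᶜ, g ω ∂μ :=
        setIntegral_nonneg (hBmeas n).compl fun ω hω => key2 n ω hω
      linarith
    have h3 : ∫ ω, g ω ∂μ ≤ 0 := by
      have := integral_sub (hφint (n + 1)) (hψint n)
      rw [hg]
      rw [this]
      rw [hstatInt n]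
      have hmono : ∫ ω, φ (n + 1) ω ∂μ ≤ ∫ ω, φ n ω ∂μ :=
        integral_mono (hφint (n + 1)) (hφint n) fun ω => mergG_succ_le n _
      linarith
    linarith
  -- pass to the limit
  have hunion : ⋃ n, B n = {ω | ∃ n : ℕ, ∑ i ∈ Finset.range (n + 1), X i ω ≤ 0} := by
    ext ω
    simp only [Set.mem_iUnion, hB, Set.mem_setOf_eq]
    constructor
    · rintro ⟨n, k, _, hk⟩; exact ⟨k, hk⟩
    · rintro ⟨n, hn⟩; exact ⟨n, n, le_refl n, hn⟩
  have htend := tendsto_setIntegral_of_monotone hBmeas hBmono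
    (hunion ▸ (hint 0).integrableOn :
      IntegrableOn (X 0) (⋃ n, B n) μ)
  rw [← hunion]
  exact le_of_tendsto htend (Filter.Eventually.of_forall hbound)
end

section
/- Let T be a measure-preserving map on a probability space, X_1 an integrable random variable, X_n := X_1 ∘ T^{n-1}, and S_n := X_1 + ... + X_n. Then S_n/n converges almost surely to E[X_1 | I], where I is the σ-field of T-invariant events. (Birkhoff's ergodic theorem.) -/
open MeasureTheory Finset Filter

/-- The σ-field of events invariant under `T`. -/
def invariantSigmaField {Ω : Type*} (m : MeasurableSpace Ω) (T : Ω → Ω) :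
    MeasurableSpace Ω where
  MeasurableSet' s := MeasurableSet s ∧ T ⁻¹' s = s
  measurableSet_empty := ⟨MeasurableSet.empty, rfl⟩
  measurableSet_compl := fun s hs =>
    ⟨hs.1.compl, by rw [Set.preimage_compl, hs.2]⟩
  measurableSet_iUnion := fun f hf =>
    ⟨MeasurableSet.iUnion fun i => (hf i).1, by
      simp only [Set.preimage_iUnion]
      exact Set.iUnion_congr fun i => (hf i).2⟩

set_option linter.unusedSectionVars false
set_option linter.unusedVariables false

namespace BirkhoffAux
open scoped Classical

variable {Ω : Type*} [m : MeasurableSpace Ω] {μ : Measure Ω} {T : Ω → Ω} {f : Ω → ℝ}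

/-- Birkhoff partial sums. -/
noncomputable def S (T : Ω → Ω) (f : Ω → ℝ) (n : ℕ) (ω : Ω) : ℝ :=
  ∑ i ∈ Finset.range n, f (T^[i] ω)

/-- `N T f n ω = max_{1 ≤ k ≤ n+1} S T f k ω`. -/
noncomputable def N (T : Ω → Ω) (f : Ω → ℝ) : ℕ → Ω → ℝ
  | 0 => f
  | n + 1 => fun ω => max (N T f n ω) (S T f (n + 2) ω)

lemma S_one (ω : Ω) : S T f 1 ω = f ω := by simp [S]

lemma S_succ (n : ℕ) (ω : Ω) : S T f (n + 1) ω = f ω + S T f n (T ω) := by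
  rw [S, Finset.sum_range_succ']
  simp only [Function.iterate_succ_apply, Function.iterate_zero_apply, S]
  ring

lemma S_le_N : ∀ n k, k ≤ n → ∀ ω : Ω, S T f (k + 1) ω ≤ N T f n ω := by
  intro n
  induction n with
  | zero => intro k hk ω; interval_cases k; simp [S_one, N]
  | succ n ih =>
    intro k hk ω
    rcases Nat.lt_or_ge k (n + 1) with h | h
    · exact le_trans (ih k (Nat.lt_succ_iff.mp h) ω) (le_max_left _ _)
    · have : k = n + 1 := le_antisymm hk h
      subst this
      exact le_max_right _ _

lemma N_succ (n : ℕ) (ω : Ω) : N T f (n + 1) ω = max (N T f n ω) (S T f (n + 2) ω) := rfl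

lemma N_mono (ω : Ω) : Monotone fun n => N T f n ω :=
  monotone_nat_of_le_succ fun n => le_max_left _ _

/-- Key inequality for Garsia's proof of the maximal ergodic theorem. -/
lemma N_le (n : ℕ) (ω : Ω) : N T f n ω ≤ f ω + max (N T f n (T ω)) 0 := by
  induction n with
  | zero =>
    exact le_add_of_nonneg_right (le_max_right _ _)
  | succ n ih =>
    rw [N_succ]
    refine max_le (le_trans ih ?_) ?_
    · exact add_le_add_right (max_le_max (le_max_left _ _) le_rfl) _
    · rw [S_succ]
      refine add_le_add_right (le_trans (S_le_N n n le_rfl (T ω)) ?_) _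
      exact le_trans (le_max_left _ _) (max_le_max (le_max_left _ _) le_rfl)

section Meas

lemma S_meas (hTm : Measurable T) (hfm : Measurable f) (n : ℕ) : Measurable (S T f n) :=
  Finset.measurable_sum _ fun i _ => hfm.comp (hTm.iterate i)

lemma N_meas (hTm : Measurable T) (hfm : Measurable f) (n : ℕ) : Measurable (N T f n) := by
  induction n with
  | zero => exact hfm
  | succ n ih => exact ih.max (S_meas hTm hfm (n + 2))

end Meas

section Int

lemma comp_iter_int (hT : MeasurePreserving T μ μ) (hfm : Measurable f) (hf : Integrable f μ) (i : ℕ) : Integrable (fun ω => f (T^[i] ω)) μ :=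
  ((hT.iterate i).integrable_comp hfm.aestronglyMeasurable).mpr hf

lemma S_int (hT : MeasurePreserving T μ μ) (hfm : Measurable f) (hf : Integrable f μ) (n : ℕ) : Integrable (S T f n) μ := by
  unfold S
  exact integrable_finset_sum _ fun i _ => comp_iter_int hT hfm hf i

lemma N_int (hT : MeasurePreserving T μ μ) (hfm : Measurable f) (hf : Integrable f μ) (n : ℕ) : Integrable (N T f n) μ := by
  induction n with
  | zero => exact hf
  | succ n ih =>
    have h := ih.sup (S_int hT hfm hf (n + 2))
    exact h.congr (Filter.Eventually.of_forall fun ω => rfl)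

/-- helper: integral invariance under a measure preserving map. -/
lemma integral_comp_mp (hT : MeasurePreserving T μ μ) {g : Ω → ℝ} (hg : AEStronglyMeasurable g μ) :
    ∫ ω, g (T ω) ∂μ = ∫ ω, g ω ∂μ := by
  conv_rhs => rw [← hT.map_eq]
  rw [integral_map hT.measurable.aemeasurable (by rwa [hT.map_eq])]

/-- The maximal ergodic theorem (Garsia's proof). -/
lemma maximal (hT : MeasurePreserving T μ μ) (hfm : Measurable f) (hf : Integrable f μ) (n : ℕ) : 0 ≤ ∫ ω in {ω | 0 < N T f n ω}, f ω ∂μ := by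
  set E := {ω | 0 < N T f n ω} with hEdef
  have hNm : Measurable (N T f n) := N_meas hT.measurable hfm n
  have hE : MeasurableSet E := measurableSet_lt measurable_const hNm
  have hNi : Integrable (N T f n) μ := N_int hT hfm hf n
  have hNpi : Integrable (fun ω => max (N T f n ω) 0) μ := hNi.pos_part
  have hNTi : Integrable (fun ω => max (N T f n (T ω)) 0) μ := by
    have := (hT.integrable_comp hNpi.aestronglyMeasurable).mpr hNpi
    exact this.congr (Filter.Eventually.of_forall fun ω => rfl)
  have step1 : ∫ ω in E, (N T f n ω - max (N T f n (T ω)) 0) ∂μ ≤ ∫ ω in E, f ω ∂μ := by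
    refine setIntegral_mono_on ((hNi.sub hNTi).integrableOn) hf.integrableOn hE ?_
    intro ω _
    have := N_le (T := T) (f := f) n ω
    linarith
  have step2 : ∫ ω in E, (N T f n ω - max (N T f n (T ω)) 0) ∂μ
      = ∫ ω in E, N T f n ω ∂μ - ∫ ω in E, max (N T f n (T ω)) 0 ∂μ :=
    integral_sub hNi.integrableOn hNTi.integrableOn
  have step3 : ∫ ω in E, N T f n ω ∂μ = ∫ ω, max (N T f n ω) 0 ∂μ := by
    rw [show ∫ ω in E, N T f n ω ∂μ = ∫ ω in E, max (N T f n ω) 0 ∂μ from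
      setIntegral_congr_fun hE fun ω hω => (max_eq_left (le_of_lt hω)).symm]
    exact setIntegral_eq_integral_of_forall_compl_eq_zero fun ω hω =>
      max_eq_right (le_of_not_gt hω)
  have step4 : ∫ ω in E, max (N T f n (T ω)) 0 ∂μ ≤ ∫ ω, max (N T f n (T ω)) 0 ∂μ :=
    setIntegral_le_integral hNTi (Filter.Eventually.of_forall fun ω => le_max_right _ _)
  have step5 : ∫ ω, max (N T f n (T ω)) 0 ∂μ = ∫ ω, max (N T f n ω) 0 ∂μ :=
    integral_comp_mp hT hNpi.aestronglyMeasurable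
  linarith

end Int

lemma iter_mem_iff {A : Set Ω} (hAi : T ⁻¹' A = A) : ∀ (i : ℕ) (ω : Ω), T^[i] ω ∈ A ↔ ω ∈ A := by
  intro i
  induction i with
  | zero => intro ω; rfl
  | succ i ih =>
    intro ω
    rw [Function.iterate_succ_apply, ih (T ω)]
    exact Set.ext_iff.mp hAi ω

lemma S_indicator {A : Set Ω} (hAi : T ⁻¹' A = A) (k : ℕ) (ω : Ω) :
    S T (A.indicator f) k ω = if ω ∈ A then S T f k ω else 0 := by
  by_cases hω : ω ∈ A
  · rw [if_pos hω]
    refine Finset.sum_congr rfl fun i _ => ?_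
    exact Set.indicator_of_mem ((iter_mem_iff hAi i ω).mpr hω) f
  · rw [if_neg hω, S]
    refine Finset.sum_eq_zero fun i _ => ?_
    exact Set.indicator_of_notMem (fun h => hω ((iter_mem_iff hAi i ω).mp h)) f

lemma N_indicator {A : Set Ω} (hAi : T ⁻¹' A = A) (n : ℕ) (ω : Ω) :
    N T (A.indicator f) n ω = if ω ∈ A then N T f n ω else 0 := by
  induction n with
  | zero =>
    show A.indicator f ω = _
    by_cases hω : ω ∈ A
    · rw [if_pos hω]; exact Set.indicator_of_mem hω f
    · rw [if_neg hω]; exact Set.indicator_of_notMem hω f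
  | succ n ih =>
    rw [N_succ, ih, S_indicator hAi]
    by_cases hω : ω ∈ A
    · simp [hω, N_succ]
    · simp [hω]

/-- Maximal ergodic theorem relative to an invariant set. -/
lemma maximal_inv (hT : MeasurePreserving T μ μ) (hfm : Measurable f) (hf : Integrable f μ)
    {A : Set Ω} (hA : MeasurableSet A) (hAi : T ⁻¹' A = A) (n : ℕ) :
    0 ≤ ∫ ω in A ∩ {ω | 0 < N T f n ω}, f ω ∂μ := by
  have hgm : Measurable (A.indicator f) := hfm.indicator hA
  have hgi : Integrable (A.indicator f) μ := hf.indicator hA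
  have h := maximal hT hgm hgi (n := n)
  have hEq : {ω | 0 < N T (A.indicator f) n ω} = A ∩ {ω | 0 < N T f n ω} := by
    ext ω
    simp only [Set.mem_setOf_eq, Set.mem_inter_iff, N_indicator hAi]
    by_cases hω : ω ∈ A
    · simp [hω]
    · simp [hω]
  rw [hEq] at h
  refine le_trans h (le_of_eq ?_)
  refine setIntegral_congr_fun (hA.inter (measurableSet_lt measurable_const
    (N_meas hT.measurable hfm n))) fun ω hω => ?_
  exact Set.indicator_of_mem hω.1 f

/-- The set where the Birkhoff averages frequently exceed `ε`. -/
def badSet (T : Ω → Ω) (f : Ω → ℝ) (ε : ℝ) : Set Ω :=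
  {ω | ∃ q : ℚ, ε < (q : ℝ) ∧ ∃ᶠ n in atTop, (q : ℝ) * (n + 1) < S T f (n + 1) ω}

lemma badSet_meas (hTm : Measurable T) (hfm : Measurable f) (ε : ℝ) :
    MeasurableSet (badSet T f ε) := by
  have : badSet T f ε = ⋃ q : ℚ, ⋃ (_ : ε < (q : ℝ)),
      ⋂ N, ⋃ n, ⋃ (_ : N ≤ n), {ω | (q : ℝ) * (n + 1) < S T f (n + 1) ω} := by
    ext ω
    simp only [badSet, Set.mem_setOf_eq, Set.mem_iUnion, Set.mem_iInter, frequently_atTop]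
    constructor
    · rintro ⟨q, hq, h⟩
      exact ⟨q, hq, fun N => by obtain ⟨n, hn, h'⟩ := h N; exact ⟨n, hn, h'⟩⟩
    · rintro ⟨q, hq, h⟩
      exact ⟨q, hq, fun N => by obtain ⟨n, hn, h'⟩ := h N; exact ⟨n, hn, h'⟩⟩
  rw [this]
  refine MeasurableSet.iUnion fun q => MeasurableSet.iUnion fun _ =>
    MeasurableSet.iInter fun N => MeasurableSet.iUnion fun n => MeasurableSet.iUnion fun _ => ?_
  exact measurableSet_lt measurable_const (S_meas hTm hfm (n + 1))

lemma freq_shift {P : ℕ → Prop} (h : ∃ᶠ n in atTop, P (n + 1)) : ∃ᶠ n in atTop, P n := by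
  rw [frequently_atTop] at h ⊢
  intro N
  obtain ⟨n, hn, h'⟩ := h N
  exact ⟨n + 1, le_trans hn (Nat.le_succ n), h'⟩

lemma freq_pred {P : ℕ → Prop} (h : ∃ᶠ n in atTop, 1 ≤ n ∧ P n) : ∃ᶠ n in atTop, P (n + 1) := by
  rw [frequently_atTop] at h ⊢
  intro N
  obtain ⟨n, hn, h1, hP⟩ := h (N + 1)
  exact ⟨n - 1, by omega, by rwa [Nat.sub_add_cancel h1]⟩

lemma badSet_inv (ε : ℝ) : T ⁻¹' badSet T f ε = badSet T f ε := by
  have hS : ∀ (n : ℕ) (ω : Ω), S T f (n + 1) (T ω) = S T f (n + 2) ω - f ω := by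
    intro n ω
    rw [show n + 2 = (n + 1) + 1 from rfl, S_succ (n + 1) ω]
    ring
  ext ω
  simp only [Set.mem_preimage, badSet, Set.mem_setOf_eq]
  constructor
  · rintro ⟨q, hq, hfreq⟩
    obtain ⟨q', hq1, hq2⟩ := exists_rat_btwn hq
    refine ⟨q', hq1, ?_⟩
    have hev : ∀ᶠ n : ℕ in atTop,
        (q' : ℝ) * (n + 1 + 1) ≤ (q : ℝ) * (n + 1) + f ω := by
      obtain ⟨M, hM⟩ := exists_nat_gt (((q' : ℝ) - f ω) / ((q : ℝ) - q'))
      filter_upwards [eventually_ge_atTop M] with n hn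
      have hqq : (0 : ℝ) < (q : ℝ) - q' := by linarith
      have h1 : ((q' : ℝ) - f ω) / ((q : ℝ) - q') < (n : ℝ) + 1 := by
        calc ((q' : ℝ) - f ω) / ((q : ℝ) - q') < M := hM
        _ ≤ (n : ℝ) := by exact_mod_cast hn
        _ ≤ (n : ℝ) + 1 := by linarith
      rw [div_lt_iff₀ hqq] at h1
      nlinarith
    refine freq_shift (P := fun n => (q' : ℝ) * (n + 1) < S T f (n + 1) ω) ?_
    have := hfreq.and_eventually hev
    refine this.mono ?_
    rintro n ⟨h1, h2⟩
    rw [hS n ω] at h1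
    push_cast
    push_cast at h1 h2
    linarith
  · rintro ⟨q, hq, hfreq⟩
    obtain ⟨q', hq1, hq2⟩ := exists_rat_btwn hq
    refine ⟨q', hq1, ?_⟩
    have hev : ∀ᶠ n : ℕ in atTop, f ω ≤ (q : ℝ) * (n + 1) - (q' : ℝ) * n := by
      obtain ⟨M, hM⟩ := exists_nat_gt ((f ω - (q : ℝ)) / ((q : ℝ) - q'))
      filter_upwards [eventually_ge_atTop M] with n hn
      have hqq : (0 : ℝ) < (q : ℝ) - q' := by linarith
      have h1 : (f ω - (q : ℝ)) / ((q : ℝ) - q') < (n : ℝ) := lt_of_lt_of_le hM (by exact_mod_cast hn)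
      rw [div_lt_iff₀ hqq] at h1
      nlinarith
    have hcomb : ∃ᶠ n in atTop, 1 ≤ n ∧
        ((q : ℝ) * (n + 1) < S T f (n + 1) ω ∧ f ω ≤ (q : ℝ) * (n + 1) - (q' : ℝ) * n) := by
      refine (hfreq.and_eventually (hev.and (eventually_ge_atTop 1))).mono ?_
      rintro n ⟨h1, h2, h3⟩
      exact ⟨h3, h1, h2⟩
    have := freq_pred hcomb
    refine this.mono ?_
    rintro n ⟨h1, h2⟩
    rw [hS n ω]
    push_cast
    push_cast at h1 h2
    linarith

lemma S_sub_const (ε : ℝ) (k : ℕ) (ω : Ω) :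
    S T (fun x => f x - ε) k ω = S T f k ω - k * ε := by
  simp only [S, Finset.sum_sub_distrib, Finset.sum_const, Finset.card_range, nsmul_eq_mul]

lemma S_neg (k : ℕ) (ω : Ω) : S T (fun x => -f x) k ω = -S T f k ω := by
  simp [S]

lemma meas_badSet_zero [IsProbabilityMeasure μ] (hT : MeasurePreserving T μ μ)
    (hfm : Measurable f) (hf : Integrable f μ)
    (hcond : ∀ A : Set Ω, MeasurableSet A → T ⁻¹' A = A → ∫ ω in A, f ω ∂μ = 0)
    {ε : ℝ} (hε : 0 < ε) : μ (badSet T f ε) = 0 := by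
  set A := badSet T f ε with hAdef
  have hA : MeasurableSet A := badSet_meas hT.measurable hfm ε
  have hAi : T ⁻¹' A = A := badSet_inv ε
  set g : Ω → ℝ := fun x => f x - ε with hgdef
  have hgm : Measurable g := hfm.sub measurable_const
  have hgi : Integrable g μ := hf.sub (integrable_const ε)
  set D : ℕ → Set Ω := fun n => A ∩ {ω | 0 < N T g n ω} with hDdef
  have hDm : ∀ n, MeasurableSet (D n) := fun n =>
    hA.inter (measurableSet_lt measurable_const (N_meas hT.measurable hgm n))
  have hmono : Monotone D := fun a b hab =>
    Set.inter_subset_inter le_rfl fun ω hω => lt_of_lt_of_le hω (N_mono ω hab)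
  have hunion : ⋃ n, D n = A := by
    refine le_antisymm (Set.iUnion_subset fun n => Set.inter_subset_left) ?_
    intro ω hω
    have hωA := hω
    obtain ⟨q, hq, hfreq⟩ := hω
    obtain ⟨n, -, hn⟩ := frequently_atTop.mp hfreq 0
    refine Set.mem_iUnion.mpr ⟨n, hωA, ?_⟩
    have h1 : 0 < S T g (n + 1) ω := by
      rw [S_sub_const]
      push_cast
      nlinarith [hn, hq]
    exact lt_of_lt_of_le h1 (S_le_N n n le_rfl ω)
  have hkey : ∀ n, 0 ≤ ∫ ω in D n, g ω ∂μ := fun n => maximal_inv hT hgm hgi hA hAi n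
  have htend : Tendsto (fun n => ∫ ω in D n, g ω ∂μ) atTop (nhds (∫ ω in A, g ω ∂μ)) := by
    have := tendsto_setIntegral_of_monotone hDm hmono (by rw [hunion]; exact hgi.integrableOn)
    rwa [hunion] at this
  have hpos : 0 ≤ ∫ ω in A, g ω ∂μ := ge_of_tendsto htend (Eventually.of_forall hkey)
  have hval : ∫ ω in A, g ω ∂μ = - ((μ A).toReal * ε) := by
    rw [hgdef]
    rw [integral_sub hf.integrableOn (integrableOn_const (measure_ne_top μ A))]
    rw [hcond A hA hAi, setIntegral_const, smul_eq_mul, measureReal_def]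
    ring
  rw [hval] at hpos
  have h0 : (μ A).toReal = 0 := le_antisymm (by nlinarith [ENNReal.toReal_nonneg (a := μ A)])
    ENNReal.toReal_nonneg
  exact (ENNReal.toReal_eq_zero_iff _).mp h0 |>.resolve_right (measure_ne_top μ A)

lemma ae_tendsto_zero [IsProbabilityMeasure μ] (hT : MeasurePreserving T μ μ)
    (hfm : Measurable f) (hf : Integrable f μ)
    (hcond : ∀ A : Set Ω, MeasurableSet A → T ⁻¹' A = A → ∫ ω in A, f ω ∂μ = 0) :
    ∀ᵐ ω ∂μ, Tendsto (fun n : ℕ => S T f n ω / n) atTop (nhds 0) := by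
  have hcond' : ∀ A : Set Ω, MeasurableSet A → T ⁻¹' A = A →
      ∫ ω in A, (fun x => -f x) ω ∂μ = 0 := by
    intro A hA hAi
    simp only
    rw [integral_neg, hcond A hA hAi, neg_zero]
  have hbad : ∀ᵐ ω ∂μ, ∀ k : ℕ,
      ω ∉ badSet T f (1 / (k + 1)) ∧ ω ∉ badSet T (fun x => -f x) (1 / (k + 1)) := by
    rw [ae_all_iff]
    intro k
    have hkpos : (0 : ℝ) < 1 / (k + 1) := by positivity
    have h1 := meas_badSet_zero hT hfm hf hcond hkpos
    have h2 := meas_badSet_zero hT hfm.neg (hf.neg) hcond' hkpos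
    exact (measure_eq_zero_iff_ae_notMem.mp h1).and (measure_eq_zero_iff_ae_notMem.mp h2)
  filter_upwards [hbad] with ω hω
  have key : Tendsto (fun n : ℕ => S T f (n + 1) ω / (n + 1)) atTop (nhds 0) := by
    rw [NormedAddCommGroup.tendsto_nhds_zero]
    intro ε hε
    obtain ⟨k, hk⟩ := exists_nat_one_div_lt hε
    obtain ⟨h1, h2⟩ := hω k
    obtain ⟨q, hq1, hq2⟩ := exists_rat_btwn hk
    simp only [badSet, Set.mem_setOf_eq, not_exists, not_and, not_frequently, not_lt] at h1 h2
    have hu := h1 q hq1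
    have hl := h2 q hq1
    filter_upwards [hu, hl] with n hun hln
    rw [S_neg] at hln
    have hn1 : (0 : ℝ) < (n : ℝ) + 1 := by positivity
    have habs : |S T f (n + 1) ω| ≤ (q : ℝ) * (n + 1) := abs_le.mpr ⟨by linarith, hun⟩
    have : ‖S T f (n + 1) ω / ((n : ℝ) + 1)‖ ≤ (q : ℝ) := by
      rw [Real.norm_eq_abs, abs_div, abs_of_pos hn1, div_le_iff₀ hn1]
      exact habs
    exact lt_of_le_of_lt this hq2
  refine (tendsto_add_atTop_iff_nat (f := fun n : ℕ => S T f n ω / n) (l := nhds 0) 1).mp ?_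
  refine key.congr fun n => ?_
  push_cast
  rfl

/-- A function measurable w.r.t. the invariant σ-field is exactly `T`-invariant. -/
lemma invariant_comp {g : Ω → ℝ}
    (hg : Measurable[invariantSigmaField m T] g) : ∀ ω, g (T ω) = g ω := by
  intro ω
  have hmeas : MeasurableSet[invariantSigmaField m T] (g ⁻¹' {g ω}) :=
    hg (measurableSet_singleton (g ω))
  obtain ⟨-, hinv⟩ := hmeas
  have hωmem : ω ∈ g ⁻¹' {g ω} := rfl
  rw [← hinv] at hωmem
  exact hωmem

end BirkhoffAux

open BirkhoffAux in
/-- Birkhoff's ergodic theorem: if `T` is measure-preserving and `X` integrable, with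
`X_n := X ∘ T^(n-1)` and `S_n := X_1 + ... + X_n`, then `S_n/n → E[X | I]` a.s., where
`I` is the σ-field of `T`-invariant events. -/
theorem birkhoff_ergodic
    {Ω : Type*} [m : MeasurableSpace Ω] (μ : Measure Ω) [IsProbabilityMeasure μ]
    (T : Ω → Ω) (hT : MeasurePreserving T μ μ)
    (X : Ω → ℝ) (hX : Integrable X μ) :
    ∀ᵐ ω ∂μ, Tendsto
      (fun n : ℕ => (∑ i ∈ Finset.range n, X (T^[i] ω)) / n)
      atTop (nhds ((μ[X | invariantSigmaField m T]) ω)) := by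
  classical
  have hI : invariantSigmaField m T ≤ m := fun s hs => hs.1
  obtain ⟨X', hX'sm, hXX'⟩ : ∃ X', StronglyMeasurable X' ∧ X =ᵐ[μ] X' :=
    ⟨hX.1.mk X, hX.1.stronglyMeasurable_mk, hX.1.ae_eq_mk⟩
  have hX' : Integrable X' μ := hX.congr hXX'
  have hX'm : Measurable X' := hX'sm.measurable
  set g : Ω → ℝ := μ[X' | invariantSigmaField m T] with hgdef
  have hg_sm : StronglyMeasurable[invariantSigmaField m T] g := stronglyMeasurable_condExp
  have hg_int : Integrable g μ := integrable_condExp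
  have hgT : ∀ ω, g (T ω) = g ω := invariant_comp hg_sm.measurable
  have hgiter : ∀ (i : ℕ) (ω : Ω), g (T^[i] ω) = g ω := by
    intro i
    induction i with
    | zero => intro ω; rfl
    | succ i ih => intro ω; rw [Function.iterate_succ_apply, ih (T ω), hgT]
  set f : Ω → ℝ := fun ω => X' ω - g ω with hfdef
  have hfm : Measurable f := hX'm.sub (hg_sm.mono hI).measurable
  have hf : Integrable f μ := hX'.sub hg_int
  have hcond : ∀ A : Set Ω, MeasurableSet A → T ⁻¹' A = A → ∫ ω in A, f ω ∂μ = 0 := by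
    intro A hA hAi
    have hA' : MeasurableSet[invariantSigmaField m T] A := ⟨hA, hAi⟩
    have h1 : ∫ ω in A, f ω ∂μ = ∫ ω in A, X' ω ∂μ - ∫ ω in A, g ω ∂μ :=
      integral_sub hX'.integrableOn hg_int.integrableOn
    rw [h1, hgdef, setIntegral_condExp hI hX' hA', sub_self]
  have hmain := ae_tendsto_zero hT hfm hf hcond
  have hX_ae : ∀ᵐ ω ∂μ, ∀ i : ℕ, X (T^[i] ω) = X' (T^[i] ω) := by
    rw [ae_all_iff]
    intro i
    exact (hT.iterate i).quasiMeasurePreserving.ae hXX'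
  have hcondeq : μ[X | invariantSigmaField m T] =ᵐ[μ] g := condExp_congr_ae hXX'
  filter_upwards [hmain, hX_ae, hcondeq] with ω h1 h2 h3
  rw [h3]
  have hS : ∀ᶠ n : ℕ in atTop,
      S T f n ω / n + g ω = (∑ i ∈ Finset.range n, X (T^[i] ω)) / n := by
    filter_upwards [eventually_ge_atTop 1] with n hn
    have hnR : (0 : ℝ) < (n : ℝ) := by exact_mod_cast hn
    have hsum : ∑ i ∈ Finset.range n, X (T^[i] ω) = S T f n ω + n * g ω := by
      have : ∀ i ∈ Finset.range n, X (T^[i] ω) = f (T^[i] ω) + g ω := by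
        intro i _
        rw [h2 i, hfdef]
        simp [hgiter i ω]
      rw [Finset.sum_congr rfl this, Finset.sum_add_distrib, Finset.sum_const,
        Finset.card_range, nsmul_eq_mul]
      rfl
    rw [hsum, add_div]
    field_simp
  have h4 : Tendsto (fun n : ℕ => S T f n ω / n + g ω) atTop (nhds (0 + g ω)) :=
    h1.add_const (g ω)
  rw [zero_add] at h4
  exact h4.congr' hS
end

section
/- Let (S_n)_{n≤0} be a real sequence with S_0 = 0 and X_0 := S_0 − S_{-1} ≤ 0. Let −1 = m_0 > m_1 > ... enumerate the integers m < 0 with S_m < min{S_{m+1},...,S_{-1}}. Suppose m < 0 with m ≠ m_j for all j ≥ 0, and let k ≥ 0 be the largest index with m < m_k. Then S_m ≥ S_{m_k}, m_k is a record after m, and consequently the mass sent from m to 0 is zero: M(m, 0) = 0. -/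
/-- `m'` is a record after `m` for the sequence `S`: `m' > m` and
`S m' = min {S (m+1), ..., S m'}`. -/
def IsRecordAfter (S : ℤ → ℝ) (m m' : ℤ) : Prop :=
  m < m' ∧ ∀ i : ℤ, m < i → i ≤ m' → S m' ≤ S i

/-- If `m < 0` is not among the `m_j` (the `m < 0` with `S m < min {S (m+1), ..., S (-1)}`,
enumerated as `-1 = m_0 > m_1 > ...`) and `k` is the largest index with `m < m_k`, then
`S m ≥ S m_k`, `m_k` is a record after `m`, and `m` sends no mass to `0`: whenever `n'`
is the record after `m` immediately preceding the record `0`, the mass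
`max {S n', S m} - max {S 0, S m}` vanishes. -/
theorem no_mass_from_nonrecord
    (S : ℤ → ℝ) (hS0 : S 0 = 0) (hX0 : S 0 - S (-1) ≤ 0)
    (ms : ℕ → ℤ) (hms0 : ms 0 = -1) (hanti : StrictAnti ms)
    (hprop : ∀ j, ms j < 0 ∧ ∀ i : ℤ, ms j < i → i < 0 → S (ms j) < S i)
    (henum : ∀ m : ℤ, m < 0 → (∀ i : ℤ, m < i → i < 0 → S m < S i) → ∃ j, ms j = m)
    (m : ℤ) (hm : m < 0) (hnot : ∀ j, ms j ≠ m)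
    (k : ℕ) (hk : m < ms k) (hkmax : ∀ j, m < ms j → j ≤ k) :
    S (ms k) ≤ S m ∧ IsRecordAfter S m (ms k) ∧
      (∀ n' : ℤ, IsRecordAfter S m n' → n' < 0 →
        (∀ i : ℤ, n' < i → i < 0 → ¬ IsRecordAfter S m i) →
        IsRecordAfter S m 0 →
        max (S n') (S m) - max (S 0) (S m) = 0) := by
  have hmk0 : ms k < 0 := (hprop k).1
  -- Key: S (ms k) is the minimum of S over (m, ms k].
  have hmin : ∀ i : ℤ, m < i → i ≤ ms k → S (ms k) ≤ S i := by
    set F : Finset ℤ := Finset.Icc (m + 1) (ms k) with hF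
    have hFne : F.Nonempty := Finset.nonempty_Icc.2 (by omega)
    obtain ⟨b, hbF, hbmin⟩ := F.exists_min_image S hFne
    set T : Finset ℤ := F.filter (fun i => S i ≤ S b) with hT
    have hbT : b ∈ T := Finset.mem_filter.2 ⟨hbF, le_refl _⟩
    have hTne : T.Nonempty := ⟨b, hbT⟩
    set i₀ : ℤ := T.max' hTne with hi₀
    have hi₀T : i₀ ∈ T := T.max'_mem hTne
    obtain ⟨hi₀F, hi₀le⟩ := Finset.mem_filter.1 hi₀T
    have hi₀mem := Finset.mem_Icc.1 hi₀F
    have hi₀min : ∀ i ∈ F, S i₀ ≤ S i := fun i hi => hi₀le.trans (hbmin i hi)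
    -- i₀ is a global record, hence equals ms k.
    have hrec : ∀ i : ℤ, i₀ < i → i < 0 → S i₀ < S i := by
      intro i hii hi0
      by_cases hle : i ≤ ms k
      · have hiF : i ∈ F := Finset.mem_Icc.2 ⟨by omega, hle⟩
        have hiT : i ∉ T := fun hiT => absurd (T.le_max' i hiT) (by omega)
        have : ¬ S i ≤ S b := fun h => hiT (Finset.mem_filter.2 ⟨hiF, h⟩)
        have := hbmin i₀ hi₀F
        linarith
      · have h1 : S (ms k) < S i := (hprop k).2 i (by omega) hi0
        have h2 : S i₀ ≤ S (ms k) :=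
          hi₀min _ (Finset.mem_Icc.2 ⟨by omega, le_refl _⟩)
        linarith
    obtain ⟨j, hj⟩ := henum i₀ (by omega) hrec
    have hjk : j ≤ k := hkmax j (by omega)
    have hji : ms k ≤ ms j := hanti.antitone hjk
    have hi₀eq : i₀ = ms k := le_antisymm hi₀mem.2 (by omega)
    intro i h1 h2
    have : S i₀ ≤ S i := hi₀min i (Finset.mem_Icc.2 ⟨by omega, h2⟩)
    rwa [hi₀eq] at this
  -- m is not a record: some i with m < i < 0 has S i ≤ S m.
  have hwit : ∃ i : ℤ, m < i ∧ i < 0 ∧ S i ≤ S m := by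
    by_contra h
    push_neg at h
    obtain ⟨j, hj⟩ := henum m hm (fun i h1 h2 => h i h1 h2)
    exact hnot j hj
  obtain ⟨w, hw1, hw2, hw3⟩ := hwit
  have hSmk_le : S (ms k) ≤ S m := by
    by_cases hle : w ≤ ms k
    · exact (hmin w hw1 hle).trans hw3
    · exact le_of_lt (lt_of_lt_of_le ((hprop k).2 w (by omega) hw2) hw3)
  refine ⟨hSmk_le, ⟨hk, hmin⟩, ?_⟩
  intro n' hn' hn'0 hbetween h0rec
  have hmkn' : ms k ≤ n' := by
    by_contra h
    exact hbetween (ms k) (by omega) hmk0 ⟨hk, hmin⟩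
  have hSn' : S n' ≤ S m := (hn'.2 (ms k) hk hmkn').trans hSmk_le
  have hS0m : S 0 ≤ S m := (h0rec.2 w hw1 (le_of_lt hw2)).trans hw3
  rw [max_eq_right hSn', max_eq_right hS0m, sub_self]
end

section
/- Let (S_n)_{n≤0} be a real sequence with S_0 = 0, X_0 := S_0 − S_{-1} ≤ 0, and let −1 = m_0 > m_1 > ... enumerate the integers m < 0 with S_m < min{S_{m+1},...,S_{-1}}. Fix j ≥ 1 with S_{m_{j-1}} ≥ 0. Then m_{j-1} and 0 are consecutive records after m_j, and hence the mass from m_j to 0 satisfies M(m_j, 0) = S_{m_{j-1}} − max{0, S_{m_j}} = max{S_{m_{j-1}}, 0} − max{S_{m_j}, 0}. -/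
/-- With `-1 = m_0 > m_1 > ...` enumerating the `m < 0` with
`S m < min {S (m+1), ..., S (-1)}`, if `S m_{j-1} ≥ 0` (for `j ≥ 1`, written here with
`m_{j-1} = ms j` and `m_j = ms (j+1)`) then `m_{j-1}` and `0` are consecutive records
after `m_j`, and the mass from `m_j` to `0` equals
`S m_{j-1} - max {0, S m_j} = max {S m_{j-1}, 0} - max {S m_j, 0}`. -/
theorem consecutive_records_mass
    (S : ℤ → ℝ) (hS0 : S 0 = 0) (hX0 : S 0 - S (-1) ≤ 0)
    (ms : ℕ → ℤ) (hms0 : ms 0 = -1) (hanti : StrictAnti ms)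
    (hprop : ∀ j, ms j < 0 ∧ ∀ i : ℤ, ms j < i → i < 0 → S (ms j) < S i)
    (henum : ∀ m : ℤ, m < 0 → (∀ i : ℤ, m < i → i < 0 → S m < S i) → ∃ j, ms j = m)
    (j : ℕ) (hSj : 0 ≤ S (ms j)) :
    IsRecordAfter S (ms (j + 1)) (ms j) ∧
    IsRecordAfter S (ms (j + 1)) 0 ∧
    (∀ i : ℤ, ms j < i → i < 0 → ¬ IsRecordAfter S (ms (j + 1)) i) ∧
    S (ms j) - max 0 (S (ms (j + 1))) = max (S (ms j)) 0 - max (S (ms (j + 1))) 0 := by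
  obtain ⟨hmj0, hmj⟩ := hprop j
  obtain ⟨hmj10, hmj1⟩ := hprop (j + 1)
  have hlt : ms (j + 1) < ms j := hanti (by omega)
  have key : ∀ i : ℤ, ms (j + 1) < i → i ≤ ms j → S (ms j) ≤ S i := by
    by_contra h
    push_neg at h
    obtain ⟨i, hi1, hi2, hi3⟩ := h
    set A : Finset ℤ := Finset.Ioc (ms (j + 1)) (ms j) with hA
    have hAne : A.Nonempty := ⟨ms j, by simp [hA, hlt]⟩
    obtain ⟨i₁, hi₁A, hi₁min⟩ := A.exists_min_image S hAne
    set B : Finset ℤ := A.filter (fun k => ∀ l ∈ A, S k ≤ S l) with hB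
    have hBne : B.Nonempty := ⟨i₁, by
      rw [hB, Finset.mem_filter]; exact ⟨hi₁A, hi₁min⟩⟩
    set i₀ := B.max' hBne with hi₀
    have hi₀B : i₀ ∈ B := B.max'_mem hBne
    have hi₀A : i₀ ∈ A := (Finset.mem_filter.mp hi₀B).1
    have hi₀min : ∀ l ∈ A, S i₀ ≤ S l := (Finset.mem_filter.mp hi₀B).2
    have hiA : i ∈ A := Finset.mem_Ioc.mpr ⟨hi1, hi2⟩
    have hSi₀ : S i₀ < S (ms j) := lt_of_le_of_lt (hi₀min i hiA) hi3
    have hi₀le : i₀ ≤ ms j := (Finset.mem_Ioc.mp hi₀A).2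
    have hi₀lt : i₀ < ms j := by
      rcases lt_or_eq_of_le hi₀le with h | h
      · exact h
      · rw [h] at hSi₀; exact absurd hSi₀ (lt_irrefl _)
    have hi₀gt : ms (j + 1) < i₀ := (Finset.mem_Ioc.mp hi₀A).1
    have hstrict : ∀ k : ℤ, i₀ < k → k < 0 → S i₀ < S k := by
      intro k hk1 hk2
      rcases le_or_gt k (ms j) with h | h
      · have hkA : k ∈ A := Finset.mem_Ioc.mpr ⟨lt_trans hi₀gt hk1, h⟩
        rcases lt_or_ge (S i₀) (S k) with h' | h'
        · exact h'
        · exfalso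
          have hkB : k ∈ B := Finset.mem_filter.mpr
            ⟨hkA, fun l hl => le_trans h' (hi₀min l hl)⟩
          exact absurd (Finset.le_max' B k hkB) (not_le.mpr hk1)
      · exact lt_trans hSi₀ (hmj k h hk2)
    obtain ⟨j', hj'⟩ := henum i₀ (lt_trans hi₀lt hmj0) hstrict
    have h1 : j < j' := by
      have : ms j' < ms j := hj' ▸ hi₀lt
      exact (hanti.lt_iff_gt).mp this
    have h2 : j' < j + 1 := by
      have : ms (j + 1) < ms j' := hj' ▸ hi₀gt
      exact (hanti.lt_iff_gt).mp this
    omega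
  have rec1 : IsRecordAfter S (ms (j + 1)) (ms j) := ⟨hlt, fun i h1 h2 => key i h1 h2⟩
  have rec2 : IsRecordAfter S (ms (j + 1)) 0 := by
    refine ⟨hmj10, fun i h1 h2 => ?_⟩
    rw [hS0]
    rcases eq_or_lt_of_le h2 with h | h
    · rw [h, hS0]
    · rcases le_or_gt i (ms j) with h' | h'
      · exact le_trans hSj (key i h1 h')
      · exact le_of_lt (lt_of_le_of_lt hSj (hmj i h' h))
  refine ⟨rec1, rec2, ?_, ?_⟩
  · intro i h1 h2 hrec
    have := hrec.2 (ms j) hlt (le_of_lt h1)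
    have := hmj i h1 h2
    linarith
  · rw [max_eq_left hSj, max_comm]
end

section
/- If (X_n)_{n≥1} is a stationary sequence of integrable random variables with S_n := X_1+...+X_n and P(∃ n ≥ 1, S_n ≤ 0) = 1, then E[X_1 ; X_1 > 0] ≤ E[−X_1 ; X_1 ≤ 0], and hence E[X_1] ≤ 0. -/
open MeasureTheory Finset

/-- Auxiliary: `brokeG n x = min(0, S_0, ..., S_{n-1})` where `S_k = x 0 + ... + x k`. -/
def brokeG : ℕ → (ℕ → ℝ) → ℝ
  | 0 => fun _ => 0
  | (n+1) => fun x => min 0 (x 0 + brokeG n (fun i => x (i+1)))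

lemma brokeG_nonpos (n : ℕ) (x : ℕ → ℝ) : brokeG n x ≤ 0 := by
  cases n with
  | zero => exact le_refl 0
  | succ n => exact min_le_left _ _

lemma brokeG_succ_le (n : ℕ) (x : ℕ → ℝ) : brokeG (n+1) x ≤ brokeG n x := by
  induction n generalizing x with
  | zero => exact brokeG_nonpos 1 x
  | succ n ih =>
      show min 0 (x 0 + brokeG (n+1) fun i => x (i+1)) ≤
        min 0 (x 0 + brokeG n fun i => x (i+1))
      exact min_le_min le_rfl (by linarith [ih (fun i => x (i+1))])

lemma brokeG_le_sum (n k : ℕ) (x : ℕ → ℝ) (h : k < n) :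
    brokeG n x ≤ ∑ i ∈ range (k+1), x i := by
  induction n generalizing k x with
  | zero => omega
  | succ n ih =>
      show min 0 (x 0 + brokeG n fun i => x (i+1)) ≤ _
      cases k with
      | zero =>
          rw [Finset.sum_range_one]
          have := brokeG_nonpos n (fun i => x (i+1))
          have := min_le_right (0:ℝ) (x 0 + brokeG n fun i => x (i+1))
          linarith
      | succ j =>
          have hj : j < n := by omega
          have := ih j (fun i => x (i+1)) hj
          have hsum : ∑ i ∈ range (j+1+1), x i
              = (∑ i ∈ range (j+1), x (i+1)) + x 0 := Finset.sum_range_succ' x (j+1)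
          have := min_le_right (0:ℝ) (x 0 + brokeG n fun i => x (i+1))
          linarith

lemma brokeG_ge (n : ℕ) (x : ℕ → ℝ) (b : ℝ) (hb : b ≤ 0)
    (h : ∀ k < n, b ≤ ∑ i ∈ range (k+1), x i) : b ≤ brokeG n x := by
  induction n generalizing x b with
  | zero => exact hb
  | succ n ih =>
      show b ≤ min 0 (x 0 + brokeG n fun i => x (i+1))
      have h0 : b ≤ x 0 := by
        have := h 0 (Nat.succ_pos n); simpa [Finset.sum_range_one] using this
      have hrec : b - x 0 ≤ brokeG n fun i => x (i+1) := by
        refine ih _ _ (by linarith) ?_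
        intro k hk
        have := h (k+1) (by omega)
        have hsum : ∑ i ∈ range (k+1+1), x i
            = (∑ i ∈ range (k+1), x (i+1)) + x 0 := Finset.sum_range_succ' x (k+1)
        linarith
      exact le_min hb (by linarith)

lemma brokeG_measurable (n : ℕ) : Measurable (brokeG n) := by
  induction n with
  | zero => exact measurable_const
  | succ n ih =>
      show Measurable fun x : ℕ → ℝ => min 0 (x 0 + brokeG n fun i => x (i+1))
      exact measurable_const.min ((measurable_pi_apply 0).add
        (ih.comp (measurable_pi_lambda _ fun i => measurable_pi_apply (i+1))))

lemma brokeG_abs_le (n : ℕ) (x : ℕ → ℝ) : |brokeG n x| ≤ ∑ i ∈ range n, |x i| := by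
  induction n generalizing x with
  | zero => simp [brokeG]
  | succ n ih =>
      have h1 : |min 0 (x 0 + brokeG n fun i => x (i+1))|
          ≤ |x 0 + brokeG n fun i => x (i+1)| := by
        rcases le_or_gt (x 0 + brokeG n fun i => x (i+1)) 0 with h | h
        · rw [min_eq_right h]
        · rw [min_eq_left h.le]; simpa [abs_of_pos h] using h.le
      have h2 := abs_add_le (x 0) (brokeG n fun i => x (i+1))
      have h3 := ih (fun i => x (i+1))
      have hsum : ∑ i ∈ range (n+1), |x i|
          = (∑ i ∈ range n, |x (i+1)|) + |x 0| := Finset.sum_range_succ' (fun i => |x i|) n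
      show |min 0 (x 0 + brokeG n fun i => x (i+1))| ≤ _
      linarith

lemma brokeG_key_mem (n : ℕ) (x : ℕ → ℝ)
    (h : ∃ k < n, ∑ i ∈ range (k+1), x i ≤ 0) :
    x 0 ≤ brokeG n x - brokeG n (fun i => x (i+1)) := by
  obtain ⟨k, hk, hS⟩ := h
  cases n with
  | zero => omega
  | succ m =>
      have hle : x 0 + brokeG m (fun i => x (i+1)) ≤ 0 := by
        cases k with
        | zero =>
            have := brokeG_nonpos m (fun i => x (i+1))
            have hx0 : x 0 ≤ 0 := by simpa [Finset.sum_range_one] using hS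
            linarith
        | succ j =>
            have hj : j < m := by omega
            have := brokeG_le_sum m j (fun i => x (i+1)) hj
            have hsum : ∑ i ∈ range (j+1+1), x i
                = (∑ i ∈ range (j+1), x (i+1)) + x 0 := Finset.sum_range_succ' x (j+1)
            linarith
      have heq : brokeG (m+1) x = x 0 + brokeG m (fun i => x (i+1)) := min_eq_right hle
      have := brokeG_succ_le m (fun i => x (i+1))
      linarith

lemma brokeG_key_not (n : ℕ) (x : ℕ → ℝ)
    (h : ∀ k < n, ¬ (∑ i ∈ range (k+1), x i ≤ 0)) :
    0 ≤ brokeG n x - brokeG n (fun i => x (i+1)) := by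
  have h1 : brokeG n x = 0 :=
    le_antisymm (brokeG_nonpos n x)
      (brokeG_ge n x 0 le_rfl fun k hk => (not_le.mp (h k hk)).le)
  have h2 := brokeG_nonpos n (fun i => x (i+1))
  linarith

/-- If `(X 0, X 1, ...)` is a stationary sequence of integrable random variables which
almost surely goes broke (`P(∃ n ≥ 1, S n ≤ 0) = 1`), then
`E[X 0 ; X 0 > 0] ≤ E[-X 0 ; X 0 ≤ 0]`, and hence `E[X 0] ≤ 0`. -/
theorem mean_nonpos_of_as_broke
    {Ω : Type*} [MeasurableSpace Ω] (μ : Measure Ω) [IsProbabilityMeasure μ]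
    (X : ℕ → Ω → ℝ) (hmeas : ∀ n, Measurable (X n))
    (hint : ∀ n, Integrable (X n) μ)
    (hstat : ∀ k : ℕ,
      Measure.map (fun ω => fun i => X (i + k) ω) μ =
      Measure.map (fun ω => fun i => X i ω) μ)
    (hbroke : μ {ω | ∃ n : ℕ, ∑ i ∈ Finset.range (n + 1), X i ω ≤ 0} = 1) :
    (∫ ω in {ω | 0 < X 0 ω}, X 0 ω ∂μ ≤ ∫ ω in {ω | X 0 ω ≤ 0}, -X 0 ω ∂μ) ∧
    ∫ ω, X 0 ω ∂μ ≤ 0 := by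
  -- measurability of the coordinate maps
  have hT0 : Measurable (fun ω => fun i => X i ω) :=
    measurable_pi_lambda _ fun i => hmeas i
  have hT1 : Measurable (fun ω => fun i => X (i + 1) ω) :=
    measurable_pi_lambda _ fun i => hmeas (i + 1)
  -- the functions m n and m' n
  set m : ℕ → Ω → ℝ := fun n ω => brokeG n (fun i => X i ω) with hm_def
  set m' : ℕ → Ω → ℝ := fun n ω => brokeG n (fun i => X (i + 1) ω) with hm'_def
  have hm_meas : ∀ n, Measurable (m n) := fun n => (brokeG_measurable n).comp hT0
  have hm'_meas : ∀ n, Measurable (m' n) := fun n => (brokeG_measurable n).comp hT1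
  have hm_int : ∀ n, Integrable (m n) μ := by
    intro n
    refine Integrable.mono' (g := fun ω => ∑ i ∈ range n, |X i ω|)
      (integrable_finset_sum _ fun i _ => (hint i).abs)
      (hm_meas n).aestronglyMeasurable ?_
    filter_upwards with ω
    simpa using brokeG_abs_le n (fun i => X i ω)
  have hm'_int : ∀ n, Integrable (m' n) μ := by
    intro n
    refine Integrable.mono' (g := fun ω => ∑ i ∈ range n, |X (i + 1) ω|)
      (integrable_finset_sum _ fun i _ => (hint (i + 1)).abs)
      (hm'_meas n).aestronglyMeasurable ?_
    filter_upwards with ω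
    simpa using brokeG_abs_le n (fun i => X (i + 1) ω)
  -- stationarity: the integrals of m n and m' n agree
  have hstat_int : ∀ n, ∫ ω, m' n ω ∂μ = ∫ ω, m n ω ∂μ := by
    intro n
    calc ∫ ω, brokeG n (fun i => X (i + 1) ω) ∂μ
        = ∫ y, brokeG n y ∂(Measure.map (fun ω => fun i => X (i + 1) ω) μ) :=
          (integral_map hT1.aemeasurable (brokeG_measurable n).aestronglyMeasurable).symm
      _ = ∫ y, brokeG n y ∂(Measure.map (fun ω => fun i => X i ω) μ) := by rw [hstat 1]
      _ = ∫ ω, brokeG n (fun i => X i ω) ∂μ :=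
          integral_map hT0.aemeasurable (brokeG_measurable n).aestronglyMeasurable
  -- the sets B n
  set B : ℕ → Set Ω := fun n => {ω | ∃ k < n, ∑ i ∈ range (k + 1), X i ω ≤ 0} with hB_def
  have hB_meas : ∀ n, MeasurableSet (B n) := by
    intro n
    have : B n = ⋃ k, ⋃ (_ : k < n), {ω | ∑ i ∈ range (k + 1), X i ω ≤ 0} := by
      ext ω; simp [hB_def]
    rw [this]
    exact MeasurableSet.iUnion fun k => MeasurableSet.iUnion fun _ =>
      measurableSet_le (Finset.measurable_sum _ fun i _ => hmeas i) measurable_const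
  have hB_mono : Monotone B := by
    intro a b hab ω ⟨k, hk, h⟩
    exact ⟨k, lt_of_lt_of_le hk hab, h⟩
  -- key inequality at finite level
  have hkey : ∀ n, ∫ ω in B n, X 0 ω ∂μ ≤ 0 := by
    intro n
    have hpt : ∀ ω, Set.indicator (B n) (fun ω => X 0 ω) ω ≤ m n ω - m' n ω := by
      intro ω
      by_cases hω : ω ∈ B n
      · rw [Set.indicator_of_mem hω]
        exact brokeG_key_mem n (fun i => X i ω) hω
      · rw [Set.indicator_of_notMem hω]
        have hω' : ∀ k < n, ¬ (∑ i ∈ range (k + 1), (fun i => X i ω) i ≤ 0) := by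
          intro k hk hle
          exact hω ⟨k, hk, by simpa using hle⟩
        exact brokeG_key_not n (fun i => X i ω) hω'
    calc ∫ ω in B n, X 0 ω ∂μ
        = ∫ ω, Set.indicator (B n) (fun ω => X 0 ω) ω ∂μ :=
          (integral_indicator (hB_meas n)).symm
      _ ≤ ∫ ω, (m n ω - m' n ω) ∂μ := by
          refine integral_mono ((hint 0).indicator (hB_meas n)) ((hm_int n).sub (hm'_int n)) hpt
      _ = ∫ ω, m n ω ∂μ - ∫ ω, m' n ω ∂μ := integral_sub (hm_int n) (hm'_int n)
      _ = 0 := by rw [hstat_int n]; ring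
  -- pass to the limit
  set U : Set Ω := {ω | ∃ n : ℕ, ∑ i ∈ Finset.range (n + 1), X i ω ≤ 0} with hU_def
  have hUnion : (⋃ n, B n) = U := by
    ext ω
    simp only [Set.mem_iUnion, hB_def, hU_def, Set.mem_setOf_eq]
    constructor
    · rintro ⟨n, k, hk, h⟩; exact ⟨k, h⟩
    · rintro ⟨n, h⟩; exact ⟨n + 1, n, Nat.lt_succ_self n, h⟩
  have hU_meas : MeasurableSet U := by rw [← hUnion]; exact MeasurableSet.iUnion hB_meas
  have htend : Filter.Tendsto (fun n => ∫ ω in B n, X 0 ω ∂μ) Filter.atTop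
      (nhds (∫ ω in ⋃ n, B n, X 0 ω ∂μ)) :=
    tendsto_setIntegral_of_monotone hB_meas hB_mono (hint 0).integrableOn
  have hcompl : μ Uᶜ = 0 := by
    rw [prob_compl_eq_zero_iff hU_meas]; exact hbroke
  have hfull : ∫ ω in ⋃ n, B n, X 0 ω ∂μ = ∫ ω, X 0 ω ∂μ := by
    rw [hUnion]
    have h2 : ∫ ω in Uᶜ, X 0 ω ∂μ = 0 := by
      rw [Measure.restrict_eq_zero.mpr hcompl, integral_zero_measure]
    have h1 := integral_add_compl hU_meas (hint 0)
    linarith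
  have hmain : ∫ ω, X 0 ω ∂μ ≤ 0 := by
    rw [← hfull]
    exact le_of_tendsto htend (Filter.Eventually.of_forall hkey)
  refine ⟨?_, hmain⟩
  have hP : MeasurableSet {ω | 0 < X 0 ω} := measurableSet_lt measurable_const (hmeas 0)
  have hceq : {ω | X 0 ω ≤ 0} = {ω | 0 < X 0 ω}ᶜ := by
    ext ω; simp [not_lt]
  have hsplit := integral_add_compl hP (hint 0)
  have hneg : ∫ ω in {ω | 0 < X 0 ω}ᶜ, -X 0 ω ∂μ = -∫ ω in {ω | 0 < X 0 ω}ᶜ, X 0 ω ∂μ :=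
    integral_neg _
  rw [hceq, hneg]
  linarith
end
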